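/- Orthonormality of added states: define φ_j^{(M)}(x) = Σ_{k=1}^M (F^{-1}(x))_{jk} φ_k(x). If additionally ⟨φ_j,φ_k⟩(x) → ∞-type limits hold so that (F^{-1}(x)) → 0 as x → x2 (e.g. each ∫_{x1}^{x2} φ_j² = ∞ and F(x)^{-1} → 0 entrywise), then ∫_{x1}^{x2} φ_j^{(M)} φ_k^{(M)} = δ_{jk} for all 1 ≤ j,k ≤ M. -/

import Mathlib

open Set MeasureTheory intervalIntegral Matrix Filter

/-- The Abraham–Moses matrix `F(x)` with entries `δ_{jk} + ∫_{x1}^x φ_j φ_k`. -/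
noncomputable def amF (x1 : ℝ) {M : ℕ} (φ : Fin M → ℝ → ℝ) (x : ℝ) :
    Matrix (Fin M) (Fin M) ℝ :=
  Matrix.of fun j k => (if j = k then (1 : ℝ) else 0) + ∫ t in x1..x, φ j t * φ k t

/-! With `G = F⁻¹` and `F' = φ φᵀ`, the derivative of the inverse gives
`G' = -G φ φᵀ G = -φ^{(M)} (φ^{(M)})ᵀ`, using that `G` is symmetric. So `φ_j^{(M)} φ_k^{(M)}` is the
derivative of `-G_{jk}`, and the improper fundamental theorem of calculus on `(x1, x2)` yields
`G_{jk}(x1⁺) - G_{jk}(x2⁻) = δ_{jk}`. Integrability comes for free: `(φ_j^{(M)})²` is a nonnegative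
derivative of a function with finite limits at both ends, and it dominates the mixed products. -/

open scoped Topology

-- The statement does not depend on the norm; the operator norm makes matrices a normed algebra,
-- where `hasFDerivAt_ringInverse` applies.
open scoped Matrix.Norms.Operator in
theorem Matrix.hasDerivAt_inv_apply {n : Type*} [Fintype n] [DecidableEq n]
    {A : ℝ → Matrix n n ℝ} {A' : Matrix n n ℝ} {x : ℝ}
    (hA : ∀ i j, HasDerivAt (fun t => A t i j) (A' i j) x) (hx : IsUnit (A x)) (i j : n) :
    HasDerivAt (fun t => (A t)⁻¹ i j) (-((A x)⁻¹ * A' * (A x)⁻¹) i j) x := by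
  have hAm : HasDerivAt A A' x := by
    have hsum : ∀ B : Matrix n n ℝ, B = ∑ i, ∑ j, B i j • single i j (1 : ℝ) := fun B => by
      conv_lhs => rw [matrix_eq_sum_single B]
      simp [smul_single]
    rw [funext fun t => hsum (A t), hsum A']
    exact .fun_sum fun i _ => .fun_sum fun j _ => (hA i j).smul_const _
  obtain ⟨u, hu⟩ := hx
  have hinv := (hu ▸ hasFDerivAt_ringInverse (𝕜 := ℝ) u).comp_hasDerivAt x hAm
  let entry : Matrix n n ℝ →L[ℝ] ℝ := LinearMap.toContinuousLinearMap (entryLinearMap ℝ ℝ i j)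
  have hval : -(Ring.inverse (A x) * A' * Ring.inverse (A x)) i j
      = entry (-(ContinuousLinearMap.mulLeftRight ℝ (Matrix n n ℝ) ↑u⁻¹ ↑u⁻¹) A') := by
    rw [← hu, Ring.inverse_unit]
    rfl
  simp only [nonsing_inv_eq_ringInverse, hval]
  exact entry.hasFDerivAt.comp_hasDerivAt x hinv

theorem Matrix.posSemidef_of_integral_mul {n α : Type*} [Fintype n] [MeasurableSpace α]
    {μ : Measure α} {f : n → α → ℝ} (hf : ∀ j k, Integrable (fun t => f j t * f k t) μ) :
    (of fun j k => ∫ t, f j t * f k t ∂μ).PosSemidef := by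
  refine .of_dotProduct_mulVec_nonneg ?_ fun v => ?_
  · ext j k
    simp [mul_comm]
  have hterm : ∀ j k, Integrable (fun t => v j * f j t * (v k * f k t)) μ := fun j k => by
    simpa [mul_mul_mul_comm] using (hf j k).const_mul (v j * v k)
  have hquad : star v ⬝ᵥ (of (fun j k => ∫ t, f j t * f k t ∂μ) *ᵥ v)
      = ∫ t, (∑ j, v j * f j t) * (∑ k, v k * f k t) ∂μ := by
    simp only [Finset.sum_mul_sum]
    rw [integral_finsetSum _ fun j _ => integrable_finsetSum _ fun k _ => hterm j k]
    simp only [integral_finsetSum _ fun k _ => hterm _ k, dotProduct, mulVec, of_apply,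
      star_trivial, Finset.mul_sum]
    refine Finset.sum_congr rfl fun j _ => Finset.sum_congr rfl fun k _ => ?_
    rw [← MeasureTheory.integral_mul_const, ← MeasureTheory.integral_const_mul]
    exact integral_congr_ae (.of_forall fun t => by ring)
  rw [hquad]
  exact integral_nonneg fun t => mul_self_nonneg _

theorem integrableOn_Ioo_deriv_of_nonneg_of_tendsto {g g' : ℝ → ℝ} {a b la lb : ℝ}
    (hderiv : ∀ x ∈ Ioo a b, HasDerivAt g (g' x) x) (hpos : ∀ x ∈ Ioo a b, 0 ≤ g' x)
    (ha : Tendsto g (𝓝[>] a) (𝓝 la)) (hb : Tendsto g (𝓝[<] b) (𝓝 lb)) :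
    IntegrableOn g' (Ioo a b) := by
  have hcont : ContinuousOn g (Ioo a b) := fun x hx =>
    (hderiv x hx).continuousAt.continuousWithinAt
  have hext : ∀ x ∈ Ioo a b, HasDerivAt (extendFrom (Ioo a b) g) (g' x) x := fun x hx =>
    (hderiv x hx).congr_of_eventuallyEq <| eventually_of_mem (isOpen_Ioo.mem_nhds hx)
      fun y hy => extendFrom_extends hcont y hy
  exact (integrableOn_deriv_of_nonneg (continuousOn_Icc_extendFrom_Ioo hcont ha hb) hext
    hpos).mono_set Ioo_subset_Ioc_self

theorem integral_Ioo_mul_eq_sub_of_hasDerivAt {n : Type*} {a b : ℝ} (hab : a < b)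
    {G : ℝ → n → n → ℝ} {ψ : n → ℝ → ℝ} {A B : n → n → ℝ}
    (hG : ∀ x ∈ Ioo a b, ∀ j k, HasDerivAt (fun t => G t j k) (-(ψ j x * ψ k x)) x)
    (ha : ∀ j k, Tendsto (fun t => G t j k) (𝓝[>] a) (𝓝 (A j k)))
    (hb : ∀ j k, Tendsto (fun t => G t j k) (𝓝[<] b) (𝓝 (B j k))) (j k : n) :
    ∫ y in Ioo a b, ψ j y * ψ k y = A j k - B j k := by
  have hderiv : ∀ i l, ∀ x ∈ Ioo a b, HasDerivAt (fun t => -G t i l) (ψ i x * ψ l x) x :=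
    fun i l x hx => neg_neg (ψ i x * ψ l x) ▸ (hG x hx i l).fun_neg
  have hsq : ∀ i, IntegrableOn (fun y => ψ i y * ψ i y) (Ioo a b) := fun i =>
    integrableOn_Ioo_deriv_of_nonneg_of_tendsto (hderiv i i) (fun x _ => mul_self_nonneg _)
      (ha i i).neg (hb i i).neg
  have hmeas : AEStronglyMeasurable (fun y => ψ j y * ψ k y) (volume.restrict (Ioo a b)) :=
    (aestronglyMeasurable_deriv (fun t => -G t j k) _).congr <|
      (ae_restrict_mem measurableSet_Ioo).mono fun x hx => (hderiv j k x hx).deriv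
  have hint : IntegrableOn (fun y => ψ j y * ψ k y) (Ioo a b) :=
    (((hsq j).add (hsq k)).div_const 2).mono' hmeas <| .of_forall fun y => by
      rw [Pi.add_apply, Real.norm_eq_abs, abs_le]
      constructor <;> nlinarith [sq_nonneg (ψ j y + ψ k y), sq_nonneg (ψ j y - ψ k y)]
  have hftc := integral_eq_sub_of_hasDerivAt_of_tendsto hab (hderiv j k)
    ((intervalIntegrable_iff_integrableOn_Ioo_of_le hab.le).2 hint) (ha j k).neg (hb j k).neg
  rw [integral_of_le hab.le, integral_Ioc_eq_integral_Ioo] at hftc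
  rw [hftc]
  ring

noncomputable def amAddedState (x1 : ℝ) {M : ℕ} (φ : Fin M → ℝ → ℝ) (j : Fin M) (y : ℝ) : ℝ :=
  ((amF x1 φ y)⁻¹ *ᵥ fun l => φ l y) j

section

variable {x1 x2 : ℝ} {M : ℕ} {φ : Fin M → ℝ → ℝ}

theorem amF_eq_one_add (x : ℝ) :
    amF x1 φ x = 1 + of fun j k => ∫ t in x1..x, φ j t * φ k t := by
  ext j k
  simp [amF, one_apply]

theorem amF_posDef {x : ℝ} (hx : x1 ≤ x)
    (hint : ∀ j k, IntervalIntegrable (fun t => φ j t * φ k t) volume x1 x) :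
    (amF x1 φ x).PosDef := by
  rw [amF_eq_one_add]
  refine PosDef.one.add_posSemidef ?_
  simp only [integral_of_le hx]
  exact posSemidef_of_integral_mul fun j k => (hint j k).1

theorem hasDerivAt_amF_apply (hφc : ∀ j, ContinuousOn (φ j) (Ioo x1 x2)) {x : ℝ}
    (hx : x ∈ Ioo x1 x2) {j k : Fin M}
    (hint : IntervalIntegrable (fun t => φ j t * φ k t) volume x1 x) :
    HasDerivAt (fun t => amF x1 φ t j k) (φ j x * φ k x) x := by
  have hcont : ContinuousOn (fun t => φ j t * φ k t) (Ioo x1 x2) := (hφc j).mul (hφc k)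
  simpa [amF] using (integral_hasDerivAt_right hint
      (hcont.stronglyMeasurableAtFilter isOpen_Ioo x hx)
      (hcont.continuousAt (isOpen_Ioo.mem_nhds hx))).const_add (if j = k then (1 : ℝ) else 0)

theorem hasDerivAt_amF_inv_apply (hφc : ∀ j, ContinuousOn (φ j) (Ioo x1 x2)) {x : ℝ}
    (hx : x ∈ Ioo x1 x2)
    (hint : ∀ j k, IntervalIntegrable (fun t => φ j t * φ k t) volume x1 x) (j k : Fin M) :
    HasDerivAt (fun t => (amF x1 φ t)⁻¹ j k)
      (-(amAddedState x1 φ j x * amAddedState x1 φ k x)) x := by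
  set u : Fin M → ℝ := fun l => φ l x
  have hpd := amF_posDef hx.1.le hint
  have hG : ((amF x1 φ x)⁻¹)ᵀ = (amF x1 φ x)⁻¹ := by
    rw [transpose_nonsing_inv, ← conjTranspose_eq_transpose_of_trivial, hpd.isHermitian.eq]
  have hGFG : (amF x1 φ x)⁻¹ * vecMulVec u u * (amF x1 φ x)⁻¹
      = vecMulVec ((amF x1 φ x)⁻¹ *ᵥ u) ((amF x1 φ x)⁻¹ *ᵥ u) := by
    rw [mul_vecMulVec, vecMulVec_mul, ← mulVec_transpose, hG]
  have h := hasDerivAt_inv_apply (A' := vecMulVec u u)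
    (fun a b => hasDerivAt_amF_apply hφc hx (hint a b)) hpd.isUnit j k
  rwa [hGFG, vecMulVec_apply] at h

end

theorem am_added_states_orthonormal (x1 x2 : ℝ) (hlt : x1 < x2)
    (M : ℕ) (φ : Fin M → ℝ → ℝ)
    (hφc : ∀ j, ContinuousOn (φ j) (Ioo x1 x2))
    (hintφ : ∀ j k, ∀ x ∈ Ioo x1 x2,
      IntegrableOn (fun y => φ j y * φ k y) (Ioo x1 x))
    (hInvLim2 : ∀ j k : Fin M,
      Tendsto (fun x => (amF x1 φ x)⁻¹ j k) (nhdsWithin x2 (Iio x2)) (nhds 0))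
    (hInvLim1 : ∀ j k : Fin M,
      Tendsto (fun x => (amF x1 φ x)⁻¹ j k) (nhdsWithin x1 (Ioi x1))
        (nhds (if j = k then 1 else 0))) :
    ∀ j k : Fin M,
      ∫ y in Ioo x1 x2,
        (∑ l : Fin M, (amF x1 φ y)⁻¹ j l * φ l y) *
        (∑ l : Fin M, (amF x1 φ y)⁻¹ k l * φ l y) =
      if j = k then 1 else 0 := by
  intro j k
  have hderiv : ∀ x ∈ Ioo x1 x2, ∀ j k, HasDerivAt (fun t => (amF x1 φ t)⁻¹ j k)
      (-(amAddedState x1 φ j x * amAddedState x1 φ k x)) x := fun x hx =>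
    hasDerivAt_amF_inv_apply hφc hx fun a b =>
      (intervalIntegrable_iff_integrableOn_Ioo_of_le hx.1.le).2 (hintφ a b x hx)
  exact (integral_Ioo_mul_eq_sub_of_hasDerivAt hlt hderiv hInvLim1 hInvLim2 j k).trans
    (sub_zero _)
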